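/- For t ≥ 6, let λ in DS(t) have the largest size, with main diagonal hook lengths h_1 > h_2 > ... > h_k. Then for each 1 ≤ i ≤ k−1, the difference h_i − h_{i+1} is either 4 or 6. -/

import Mathlib

/-- An integer partition, given by its (weakly decreasing, eventually zero)
sequence of parts, indexed from `0`. -/
structure IntPartition where
  parts : ℕ → ℕ
  antitone : ∀ i j, i ≤ j → parts j ≤ parts i
  finite : ∃ N, ∀ i, N ≤ i → parts i = 0

namespace IntPartition

/-- The size of a partition: the sum of its parts. -/
noncomputable def size (lam : IntPartition) : ℕ := ∑ᶠ i, lam.parts i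

/-- The parts of the conjugate partition: `conjParts lam j` is the number of
rows `i` with `lam.parts i > j` (rows and columns are `0`-indexed). -/
noncomputable def conjParts (lam : IntPartition) (j : ℕ) : ℕ :=
  Nat.card {i : ℕ | j < lam.parts i}

/-- A partition is self-conjugate if it equals its conjugate. -/
def IsSelfConjugate (lam : IntPartition) : Prop :=
  ∀ j, lam.conjParts j = lam.parts j

/-- `(i, j)` (both `0`-indexed) is a cell of the Young diagram of `lam`. -/
def IsCell (lam : IntPartition) (i j : ℕ) : Prop := j < lam.parts i

/-- The hook length of the cell `(i, j)` (both `0`-indexed): the number of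
cells directly to the right, plus the number directly below, plus one. -/
noncomputable def hook (lam : IntPartition) (i j : ℕ) : ℕ :=
  (lam.parts i - j) + (lam.conjParts j - i) - 1

/-- A partition is a `t`-core if no hook length is divisible by `t`. -/
def IsCore (lam : IntPartition) (t : ℕ) : Prop :=
  ∀ i j, lam.IsCell i j → ¬ (t ∣ lam.hook i j)

/-- The size of the Durfee square: the largest `k` such that the partition has
at least `k` parts of size at least `k`. -/
noncomputable def durfee (lam : IntPartition) : ℕ :=
  Nat.card {i : ℕ | i < lam.parts i}

/-- A partition has distinct parts if its (nonzero) parts are pairwise different. -/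
def DistinctParts (lam : IntPartition) : Prop :=
  ∀ i j, lam.parts i ≠ 0 → lam.parts j ≠ 0 → i ≠ j → lam.parts i ≠ lam.parts j

/-- The set of main diagonal hook lengths of `lam`. -/
noncomputable def MD (lam : IntPartition) : Set ℕ :=
  {h | ∃ i < lam.durfee, lam.hook i i = h}

/-- `lam ∈ DS(t)`: `lam` is a self-conjugate `(t, t+1)`-core partition whose
first `durfee lam` parts are pairwise distinct. -/
def InDS (lam : IntPartition) (t : ℕ) : Prop :=
  lam.IsSelfConjugate ∧ lam.IsCore t ∧ lam.IsCore (t + 1) ∧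
    ∀ i j, i < lam.durfee → j < lam.durfee → i ≠ j → lam.parts i ≠ lam.parts j

end IntPartition

/-!
Let `λ` be self-conjugate with Durfee square of size `d` and distinct first `d` parts, and let
`a_i = λ_i - i - 1` be the arm of the diagonal cell `(i, i)`. Its hook length is `2 a_i + 1`,
`|λ| = ∑ (2 a_i + 1)`, and `a_i ≥ a_{i+1} + 2`. The beta-set of `λ` (its first-column hook
lengths) is `{λ_0 + a_i} ∪ {x < λ_0 | λ_0 - 1 - x ∉ {a_i}}`, and reading the `t`- and
`(t+1)`-core conditions on it turns membership in `DS(t)` into `a_i < t` and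
`a_i + a_j + 1 ∉ {t, t + 1}` for all `i, j`. Conversely every such sequence is the sequence of
diagonal arms of a member of `DS(t)`. If `a_k ≥ a_{k+1} + 4`, raising `a_{k+1}` by one or two
(and, when `a_{k+1} + a_r + 2 = t`, also raising `a_r` by one) keeps these conditions and makes
`|λ|` larger. Hence in a largest member of `DS(t)` consecutive diagonal arms differ by 2 or 3, and
consecutive diagonal hooks by 4 or 6.
-/

theorem Set.mem_iff_lt_natCard_of_isLowerSet {s : Set ℕ} (hs : IsLowerSet s) (hfin : s.Finite)
    (i : ℕ) : i ∈ s ↔ i < Nat.card s := by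
  obtain rfl | ⟨a, rfl⟩ := hs.eq_univ_or_Iio
  · exact absurd hfin Set.infinite_univ
  · simp

theorem Nat.add_mul_sub_le_of_forall_succ {q : ℕ → ℕ} {d c : ℕ}
    (h : ∀ i, i + 1 < d → q (i + 1) + c ≤ q i) {i j : ℕ} (hij : i ≤ j) (hj : j < d) :
    q j + c * (j - i) ≤ q i := by
  induction j, hij using Nat.le_induction with
  | base => simp
  | succ j hij ih =>
    have := h j hj
    have := ih (by omega)
    rw [Nat.sub_add_comm hij, Nat.mul_succ]
    omega

theorem Nat.add_le_add_of_forall_succ_lt {q : ℕ → ℕ} {d : ℕ}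
    (hq : ∀ i, i + 1 < d → q (i + 1) < q i) {i j : ℕ} (hij : i ≤ j) (hj : j < d) :
    q j + j ≤ q i + i := by
  have := Nat.add_mul_sub_le_of_forall_succ (c := 1) hq hij hj
  omega

namespace IntPartition

open Finset

variable (lam : IntPartition)

theorem lt_conjParts_iff (i j : ℕ) : i < lam.conjParts j ↔ j < lam.parts i := by
  obtain ⟨N, hN⟩ := lam.finite
  refine (Set.mem_iff_lt_natCard_of_isLowerSet (s := {i | j < lam.parts i}) ?_ ?_ i).symm
  · exact fun a b hab hb => lt_of_lt_of_le hb (lam.antitone b a hab)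
  · refine (Set.finite_Iio N).subset fun i hi => ?_
    by_contra h
    simp_all [hN i (not_lt.mp h)]

theorem lt_durfee_iff (i : ℕ) : i < lam.durfee ↔ i < lam.parts i := by
  obtain ⟨N, hN⟩ := lam.finite
  refine (Set.mem_iff_lt_natCard_of_isLowerSet (s := {i | i < lam.parts i}) ?_ ?_ i).symm
  · exact fun a b hab hb => lt_of_le_of_lt hab (lt_of_lt_of_le hb (lam.antitone b a hab))
  · refine (Set.finite_Iio N).subset fun i hi => ?_
    by_contra h
    simp_all [hN i (not_lt.mp h)]

theorem conjParts_antitone : Antitone lam.conjParts := fun j j' hj =>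
  le_of_forall_lt fun i hi => by
    rw [lt_conjParts_iff] at hi ⊢
    omega

theorem durfee_le_parts_zero : lam.durfee ≤ lam.parts 0 :=
  le_of_forall_lt fun i hi =>
    lt_of_lt_of_le ((lam.lt_durfee_iff i).mp hi) (lam.antitone 0 i (Nat.zero_le i))

theorem durfee_le_parts {r : ℕ} (hr : r < lam.durfee) : lam.durfee ≤ lam.parts r := by
  have := lam.antitone r (lam.durfee - 1) (by omega)
  have := (lam.lt_durfee_iff (lam.durfee - 1)).mp (by omega)
  omega

theorem parts_le_durfee {i : ℕ} (hi : lam.durfee ≤ i) : lam.parts i ≤ lam.durfee := by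
  have h₁ := lam.antitone _ _ hi
  have h₂ := (lam.lt_durfee_iff lam.durfee).not.mp (lt_irrefl _)
  omega

theorem durfee_le_conjParts {r : ℕ} (hr : r < lam.durfee) : lam.durfee ≤ lam.conjParts r :=
  le_of_forall_lt fun c hc =>
    (lam.lt_conjParts_iff c r).mpr (by have := lam.durfee_le_parts hc; omega)

theorem size_eq_sum_range {N : ℕ} (hN : ∀ i, N ≤ i → lam.parts i = 0) :
    lam.size = ∑ i ∈ range N, lam.parts i :=
  finsum_eq_sum_of_support_subset _ fun i hi => by
    by_contra h
    exact hi (hN i (by simpa using h))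

noncomputable def numParts : ℕ := lam.conjParts 0

-- `beta i` is the hook length of the cell `(i, 0)`; `nonBeta` lists the complement of `betaSet`
-- in increasing order.
noncomputable def beta (i : ℕ) : ℕ := lam.parts i + (lam.numParts - 1 - i)

noncomputable def betaSet : Set ℕ := lam.beta '' Set.Iio lam.numParts

noncomputable def nonBeta (j : ℕ) : ℕ := j + (lam.numParts - lam.conjParts j)

theorem conjParts_le_numParts (j : ℕ) : lam.conjParts j ≤ lam.numParts :=
  lam.conjParts_antitone (Nat.zero_le j)

theorem nonBeta_lt_beta_iff {i : ℕ} (hi : i < lam.numParts) (j : ℕ) :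
    lam.nonBeta j < lam.beta i ↔ j < lam.parts i := by
  have := lam.conjParts_le_numParts j
  have := lam.lt_conjParts_iff i j
  unfold nonBeta beta
  omega

theorem nonBeta_ne_beta {i : ℕ} (hi : i < lam.numParts) (j : ℕ) :
    lam.nonBeta j ≠ lam.beta i := by
  have := lam.conjParts_le_numParts j
  have := lam.lt_conjParts_iff i j
  unfold nonBeta beta
  omega

theorem nonBeta_notMem_betaSet (j : ℕ) : lam.nonBeta j ∉ lam.betaSet :=
  fun ⟨_, hi, h⟩ => lam.nonBeta_ne_beta hi j h.symm

theorem hook_add_nonBeta {i j : ℕ} (h : j < lam.parts i) :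
    lam.hook i j + lam.nonBeta j = lam.beta i ∧ 0 < lam.hook i j := by
  have := lam.conjParts_le_numParts j
  have := (lam.lt_conjParts_iff i j).mpr h
  unfold hook nonBeta beta
  omega

theorem exists_nonBeta_le_lt (x : ℕ) :
    ∃ j, lam.nonBeta j ≤ x ∧ x < lam.nonBeta (j + 1) := by
  classical
  have hex : ∃ j, x < lam.nonBeta (j + 1) := ⟨x, by unfold nonBeta; omega⟩
  refine ⟨Nat.find hex, ?_, Nat.find_spec hex⟩
  rcases hj : Nat.find hex with _ | j
  · simp [nonBeta, numParts]
  · exact not_lt.mp (Nat.find_min hex (show j < Nat.find hex by omega))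

theorem mem_betaSet_or_mem_range_nonBeta (x : ℕ) :
    x ∈ lam.betaSet ∨ x ∈ Set.range lam.nonBeta := by
  obtain ⟨j, hle, hlt⟩ := lam.exists_nonBeta_le_lt x
  rcases hle.eq_or_lt with heq | hgt
  · exact Or.inr ⟨j, heq⟩
  -- the rows `r` with `conjParts (j + 1) ≤ r < conjParts j` have length `j + 1`, and their
  -- beta-numbers fill the interval `(nonBeta j, nonBeta (j + 1))`
  have h₀ := lam.conjParts_le_numParts j
  have h₁ := lam.conjParts_antitone (Nat.le_succ j)
  have e₀ : lam.nonBeta j = j + (lam.numParts - lam.conjParts j) := rfl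
  have e₁ : lam.nonBeta (j + 1) = j + 1 + (lam.numParts - lam.conjParts (j + 1)) := rfl
  set r := lam.conjParts j - (x - lam.nonBeta j)
  have hr : j < lam.parts r := (lam.lt_conjParts_iff r j).mp (by omega)
  have hr' : ¬ j + 1 < lam.parts r := fun h => by
    have := (lam.lt_conjParts_iff r (j + 1)).mpr h
    omega
  refine Or.inl ⟨r, show r < lam.numParts by omega, ?_⟩
  unfold beta
  omega

theorem isCore_iff_sub_mem_betaSet (s : ℕ) :
    lam.IsCore s ↔ ∀ x ∈ lam.betaSet, s ≤ x → x - s ∈ lam.betaSet := by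
  constructor
  · rintro hcore _ ⟨i, hi, rfl⟩ hs
    by_contra hx
    obtain ⟨j, hj⟩ := (lam.mem_betaSet_or_mem_range_nonBeta _).resolve_left hx
    have hne := lam.nonBeta_ne_beta hi j
    have hcell : j < lam.parts i := (lam.nonBeta_lt_beta_iff hi j).mp (by omega)
    have := (lam.hook_add_nonBeta hcell).1
    exact hcore i j hcell ⟨1, by omega⟩
  · intro H i j hcell ⟨k, hk⟩
    have hsub : ∀ m, ∀ x ∈ lam.betaSet, s * m ≤ x → x - s * m ∈ lam.betaSet := by
      intro m
      induction m with
      | zero => simp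
      | succ m ih =>
        intro x hx hle
        have := H _ (ih x hx (by nlinarith)) (by rw [Nat.mul_succ] at hle; omega)
        rwa [Nat.sub_sub, ← Nat.mul_succ] at this
    have hi : i < lam.numParts := (lam.lt_conjParts_iff i 0).mpr (Nat.zero_lt_of_lt hcell)
    obtain ⟨hsum, -⟩ := lam.hook_add_nonBeta hcell
    have := hsub k _ ⟨i, hi, rfl⟩ (by omega)
    rw [show lam.beta i - s * k = lam.nonBeta j by omega] at this
    exact lam.nonBeta_notMem_betaSet j this

theorem parts_eq_card_filter {i : ℕ} (hi : lam.durfee ≤ i) :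
    lam.parts i = #{r ∈ range lam.durfee | i < lam.conjParts r} := by
  have := lam.parts_le_durfee hi
  have : {r ∈ range lam.durfee | i < lam.conjParts r} = range (lam.parts i) := by
    ext r
    simp only [mem_filter, mem_range, lt_conjParts_iff]
    omega
  rw [this, card_range]

theorem sum_Ico_durfee_parts {N : ℕ} (hN : lam.numParts ≤ N) :
    ∑ i ∈ Ico lam.durfee N, lam.parts i =
      ∑ r ∈ range lam.durfee, (lam.conjParts r - lam.durfee) := by
  rw [sum_congr rfl fun i hi => lam.parts_eq_card_filter (mem_Ico.mp hi).1]
  simp_rw [card_filter]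
  rw [sum_comm]
  refine sum_congr rfl fun r hr => ?_
  have := lam.conjParts_le_numParts r
  rw [← card_filter, ← Nat.card_Ico]
  congr 1
  ext i
  simp only [mem_filter, mem_Ico]
  omega

theorem size_eq_sum_hook_self : lam.size = ∑ r ∈ range lam.durfee, lam.hook r r := by
  obtain ⟨N, hN⟩ := lam.finite
  set d := lam.durfee
  have hM : ∀ i, N + lam.numParts + d ≤ i → lam.parts i = 0 := fun i hi => hN i (by omega)
  rw [lam.size_eq_sum_range hM, ← sum_range_add_sum_Ico _ (show d ≤ _ by omega),
    lam.sum_Ico_durfee_parts (by omega)]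
  have hrow : ∀ r ∈ range d, r < lam.parts r := fun r hr =>
    (lam.lt_durfee_iff r).mp (mem_range.mp hr)
  have hcol : ∀ r ∈ range d, d ≤ lam.conjParts r := fun r hr =>
    lam.durfee_le_conjParts (mem_range.mp hr)
  calc ∑ r ∈ range d, lam.parts r + ∑ r ∈ range d, (lam.conjParts r - d)
      = ∑ r ∈ range d, ((lam.parts r - r) + (lam.conjParts r - d) + r) := by
        rw [← sum_add_distrib]
        exact sum_congr rfl fun r hr => by have := hrow r hr; omega
    _ = ∑ r ∈ range d, ((lam.parts r - r) + (lam.conjParts r - d)) +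
          ∑ r ∈ range d, (d - 1 - r) := by
        rw [sum_add_distrib, sum_range_reflect (fun r => r) d]
    _ = ∑ r ∈ range d, lam.hook r r := by
        rw [← sum_add_distrib]
        refine sum_congr rfl fun r hr => ?_
        have := hrow r hr
        have := hcol r hr
        have := mem_range.mp hr
        unfold hook
        omega

noncomputable def diagArm (i : ℕ) : ℕ := lam.parts i - i - 1

noncomputable def diagArms : Set ℕ := lam.diagArm '' Set.Iio lam.durfee

theorem diagArm_lt_parts_zero {i : ℕ} (hi : i < lam.durfee) : lam.diagArm i < lam.parts 0 := by
  have := lam.antitone 0 i (Nat.zero_le i)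
  have := (lam.lt_durfee_iff i).mp hi
  unfold diagArm
  omega

section SelfConjugate

variable {lam} (hsc : lam.IsSelfConjugate)
include hsc

theorem IsSelfConjugate.numParts_eq : lam.numParts = lam.parts 0 := hsc 0

theorem IsSelfConjugate.hook_self {i : ℕ} (hi : i < lam.durfee) :
    lam.hook i i = 2 * lam.diagArm i + 1 := by
  have := hsc i
  have := (lam.lt_durfee_iff i).mp hi
  unfold hook diagArm
  omega

theorem IsSelfConjugate.size_eq :
    lam.size = ∑ r ∈ range lam.durfee, (2 * lam.diagArm r + 1) := by
  rw [size_eq_sum_hook_self]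
  exact sum_congr rfl fun r hr => hsc.hook_self (mem_range.mp hr)

theorem IsSelfConjugate.beta_eq {i : ℕ} (hi : i < lam.durfee) :
    lam.beta i = lam.parts 0 + lam.diagArm i := by
  have := hsc.numParts_eq
  have := lam.antitone 0 i (Nat.zero_le i)
  have := (lam.lt_durfee_iff i).mp hi
  have := lam.durfee_le_parts_zero
  unfold beta diagArm
  omega

theorem IsSelfConjugate.beta_lt {i : ℕ} (hi : lam.durfee ≤ i) (hi' : i < lam.numParts) :
    lam.beta i < lam.parts 0 := by
  have := hsc.numParts_eq
  have := lam.parts_le_durfee hi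
  unfold beta
  omega

theorem IsSelfConjugate.nonBeta_add_diagArm {j : ℕ} (hj : j < lam.durfee) :
    lam.nonBeta j + lam.diagArm j + 1 = lam.parts 0 := by
  have := hsc.numParts_eq
  have := hsc j
  have := lam.antitone 0 j (Nat.zero_le j)
  have := (lam.lt_durfee_iff j).mp hj
  unfold nonBeta diagArm
  omega

theorem IsSelfConjugate.parts_zero_le_nonBeta {j : ℕ} (hj : lam.durfee ≤ j) :
    lam.parts 0 ≤ lam.nonBeta j := by
  have := hsc.numParts_eq
  have := hsc j
  have := lam.parts_le_durfee hj
  have := lam.antitone 0 j (Nat.zero_le j)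
  unfold nonBeta
  omega

theorem IsSelfConjugate.add_mem_betaSet_iff (a : ℕ) :
    lam.parts 0 + a ∈ lam.betaSet ↔ a ∈ lam.diagArms := by
  constructor
  · rintro ⟨i, hi, hβ⟩
    have hid : i < lam.durfee := by
      by_contra hc
      have := hsc.beta_lt (not_lt.mp hc) hi
      omega
    exact ⟨i, hid, by have := hsc.beta_eq hid; omega⟩
  · rintro ⟨i, hi, rfl⟩
    refine ⟨i, ?_, hsc.beta_eq hi⟩
    have := lam.durfee_le_parts_zero
    have := hsc.numParts_eq
    simp only [Set.mem_Iio] at hi ⊢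
    omega

theorem IsSelfConjugate.mem_betaSet_iff_of_lt {x : ℕ} (hx : x < lam.parts 0) :
    x ∈ lam.betaSet ↔ lam.parts 0 - 1 - x ∉ lam.diagArms := by
  constructor
  · rintro hx' ⟨j, hj, hj'⟩
    have := hsc.nonBeta_add_diagArm hj
    exact lam.nonBeta_notMem_betaSet j (by convert hx' using 1; omega)
  · intro hnot
    refine (lam.mem_betaSet_or_mem_range_nonBeta x).resolve_right ?_
    rintro ⟨j, rfl⟩
    have hj : j < lam.durfee := by
      by_contra hc
      have := hsc.parts_zero_le_nonBeta (not_lt.mp hc)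
      omega
    have := hsc.nonBeta_add_diagArm hj
    exact hnot ⟨j, hj, by omega⟩

theorem IsSelfConjugate.isCore_iff {s : ℕ} (hs : ∀ a ∈ lam.diagArms, a < s) :
    lam.IsCore s ↔ ∀ a ∈ lam.diagArms, ∀ b ∈ lam.diagArms, a + b + 1 ≠ s := by
  rw [isCore_iff_sub_mem_betaSet]
  constructor
  · rintro H a ha b ⟨j, hj, rfl⟩ hab
    have := lam.diagArm_lt_parts_zero hj
    have hx := H _ ((hsc.add_mem_betaSet_iff a).mpr ha) (by omega)
    rw [hsc.mem_betaSet_iff_of_lt (by omega)] at hx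
    exact hx ⟨j, hj, by omega⟩
  · intro H x hx hsx
    by_cases hx₀ : lam.parts 0 ≤ x
    · obtain ⟨a, rfl⟩ := Nat.exists_eq_add_of_le hx₀
      have ha := (hsc.add_mem_betaSet_iff a).mp hx
      have := hs a ha
      rw [hsc.mem_betaSet_iff_of_lt (by omega)]
      exact fun hb => H a ha _ hb (by omega)
    · rw [hsc.mem_betaSet_iff_of_lt (by omega)]
      intro hb
      have := hs _ hb
      omega

theorem IsSelfConjugate.parts_zero_le_of_isCore {t : ℕ}
    (hgap : ∀ a ∈ lam.diagArms, a + 1 ∉ lam.diagArms) (ht : lam.IsCore t)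
    (ht₁ : lam.IsCore (t + 1)) : lam.parts 0 ≤ t := by
  by_contra! hn
  -- subtracting `t` and `t + 1` from the largest beta-number `parts 0 + diagArm 0` would give
  -- two consecutive diagonal arms, or both `0 ∈ diagArms` and `0 ∉ diagArms`
  rw [isCore_iff_sub_mem_betaSet] at ht ht₁
  have hd : 0 < lam.durfee := (lam.lt_durfee_iff 0).mpr (by omega)
  have h₀ : lam.parts 0 - 1 ∈ lam.diagArms := ⟨0, hd, by unfold diagArm; omega⟩
  have hβ := (hsc.add_mem_betaSet_iff _).mpr h₀
  have h₁ := (hsc.add_mem_betaSet_iff _).mp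
    (by convert ht _ hβ (by omega) using 1; omega : lam.parts 0 + (lam.parts 0 - 1 - t) ∈ _)
  rcases (show lam.parts 0 = t + 1 ∨ t + 2 ≤ lam.parts 0 by omega) with hn' | hn'
  · have h₂ := (hsc.mem_betaSet_iff_of_lt (x := lam.parts 0 - 1) (by omega)).mp
      (by convert ht₁ _ hβ (by omega) using 1; omega)
    exact h₂ (by convert h₁ using 1; omega)
  · have h₂ := (hsc.add_mem_betaSet_iff _).mp
      (by convert ht₁ _ hβ (by omega) using 1; omega : lam.parts 0 + (lam.parts 0 - 2 - t) ∈ _)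
    exact hgap _ h₂ (by convert h₁ using 1; omega)

end SelfConjugate

end IntPartition

-- The diagonal arms `q 0 > ⋯ > q (d - 1)` of a member of `DS(t)`. For the diagonal hooks
-- `h_i = 2 q_i + 1` these are the conditions `h_i < 2t`, `h_i - h_{i+1} ≥ 4` and
-- `h_i + h_j ∉ {2t, 2t + 2}`; the case `i = j` of the last one excludes `h_i ∈ {t, t + 1}`.
structure IsDSArms (t d : ℕ) (q : ℕ → ℕ) : Prop where
  succ_add_two_le : ∀ i, i + 1 < d → q (i + 1) + 2 ≤ q i
  lt : ∀ i < d, q i < t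
  add_add_one_ne : ∀ i < d, ∀ j < d, q i + q j + 1 ≠ t
  add_ne : ∀ i < d, ∀ j < d, q i + q j ≠ t

namespace IsDSArms

variable {t d : ℕ} {q : ℕ → ℕ}

theorem succ_lt (h : IsDSArms t d q) (i : ℕ) (hi : i + 1 < d) : q (i + 1) < q i := by
  have := h.succ_add_two_le i hi
  omega

theorem add_two_le (h : IsDSArms t d q) {i j : ℕ} (hij : i < j) (hj : j < d) :
    q j + 2 ≤ q i := by
  have := Nat.add_mul_sub_le_of_forall_succ h.succ_add_two_le hij.le hj
  omega

theorem add_two_le_or (h : IsDSArms t d q) {i j : ℕ} (hi : i < d) (hj : j < d) (hij : i ≠ j) :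
    q i + 2 ≤ q j ∨ q j + 2 ≤ q i := by
  rcases lt_or_gt_of_ne hij with hij | hij
  · exact Or.inr (h.add_two_le hij hj)
  · exact Or.inl (h.add_two_le hij hi)

theorem update (h : IsDSArms t d q) {p v : ℕ}
    (hprev : ∀ i, i + 1 = p → v + 2 ≤ q i) (hnext : p + 1 < d → q (p + 1) + 2 ≤ v)
    (hvt : v < t) (hvv : 2 * v + 1 ≠ t ∧ 2 * v ≠ t)
    (hsum : ∀ j < d, j ≠ p → q j + v + 1 ≠ t ∧ q j + v ≠ t) :
    IsDSArms t d (Function.update q p v) := by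
  constructor
  · intro i hi
    have := h.succ_add_two_le i hi
    have := hprev i
    simp only [Function.update_apply]
    split_ifs <;> subst_vars <;> omega
  · intro i hi
    have := h.lt i hi
    simp only [Function.update_apply]
    split_ifs <;> omega
  · intro i hi j hj
    have := h.add_add_one_ne i hi j hj
    have := hsum i hi
    have := hsum j hj
    simp only [Function.update_apply]
    split_ifs <;> omega
  · intro i hi j hj
    have := h.add_ne i hi j hj
    have := hsum i hi
    have := hsum j hj
    simp only [Function.update_apply]
    split_ifs <;> omega

-- Here `q (k + 1)` cannot be raised alone: with `q r` it would sum to `t - 1` or `t`. Raising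
-- both moves that sum to `t + 1`.
theorem update_update (h : IsDSArms t d q) {k r : ℕ} (hk : k + 1 < d)
    (hgap : q (k + 1) + 4 ≤ q k) (hr : r < d) (hrk : r ≠ k + 1)
    (hsum : q (k + 1) + q r + 2 = t) :
    IsDSArms t d (Function.update (Function.update q (k + 1) (q (k + 1) + 2)) r (q r + 1)) := by
  have hw : q r + 2 ≤ q (k + 1) ∨ q (k + 1) + 4 ≤ q r := by
    rcases lt_or_gt_of_ne hrk with hrk | hrk
    · rcases (show r = k ∨ r < k by omega) with rfl | hrk'
      · omega
      · have := h.add_two_le hrk' (by omega)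
        omega
    · exact Or.inl (h.add_two_le hrk hr)
  have hfar : ∀ x < d, x ≠ k + 1 → x ≠ r →
      (q x + 2 ≤ q (k + 1) ∨ q (k + 1) + 2 ≤ q x) ∧ (q x + 2 ≤ q r ∨ q r + 2 ≤ q x) :=
    fun x hx hxk hxr => ⟨h.add_two_le_or hx hk hxk, h.add_two_le_or hx hr hxr⟩
  have hkt := h.lt k (by omega)
  constructor
  · intro i hi
    have := h.succ_add_two_le i hi
    have := h.add_ne i (by omega) (k + 1) hk
    simp only [Function.update_apply, Nat.add_right_cancel_iff]
    split_ifs <;> subst_vars <;> omega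
  · intro i hi
    have := h.lt i hi
    simp only [Function.update_apply]
    split_ifs <;> omega
  · intro i hi j hj
    have := h.add_add_one_ne i hi j hj
    have := hfar i hi
    have := hfar j hj
    simp only [Function.update_apply]
    split_ifs <;> subst_vars <;> omega
  · intro i hi j hj
    have := h.add_ne i hi j hj
    have := hfar i hi
    have := hfar j hj
    simp only [Function.update_apply]
    split_ifs <;> subst_vars <;> omega

theorem exists_larger_of_add_four_le (h : IsDSArms t d q) {k : ℕ} (hk : k + 1 < d)
    (hgap : q (k + 1) + 4 ≤ q k) :
    ∃ q', IsDSArms t d q' ∧ (∀ i, q i ≤ q' i) ∧ q (k + 1) < q' (k + 1) := by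
  by_cases hpair : ∃ r < d, r ≠ k + 1 ∧ q (k + 1) + q r + 2 = t
  · obtain ⟨r, hr, hrk, hsum⟩ := hpair
    refine ⟨_, h.update_update hk hgap hr hrk hsum, fun i => ?_, ?_⟩
    · simp only [Function.update_apply]
      split_ifs <;> subst_vars <;> omega
    · simp only [Function.update_apply, hrk.symm, if_false, if_true]
      omega
  push Not at hpair
  obtain ⟨v, hbv, hvk, hvv, hsum⟩ : ∃ v, q (k + 1) < v ∧ v + 2 ≤ q k ∧
      (2 * v + 1 ≠ t ∧ 2 * v ≠ t) ∧
      ∀ j < d, j ≠ k + 1 → q j + v + 1 ≠ t ∧ q j + v ≠ t := by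
    have hfar : ∀ j < d, j ≠ k + 1 → (q j + 2 ≤ q (k + 1) ∨ q (k + 1) + 2 ≤ q j) ∧
        q j + q (k + 1) + 1 ≠ t ∧ q j + q (k + 1) ≠ t ∧ q (k + 1) + q j + 2 ≠ t :=
      fun j hj hjk => ⟨h.add_two_le_or hj hk hjk, h.add_add_one_ne j hj _ hk,
        h.add_ne j hj _ hk, hpair j hj hjk⟩
    have := h.add_add_one_ne _ hk _ hk
    have := h.add_ne _ hk _ hk
    by_cases ht : t = 2 * q (k + 1) + 2 ∨ t = 2 * q (k + 1) + 3
    · exact ⟨q (k + 1) + 2, by omega, by omega, by omega,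
        fun j hj hjk => by have := hfar j hj hjk; omega⟩
    · exact ⟨q (k + 1) + 1, by omega, by omega, by omega,
        fun j hj hjk => by have := hfar j hj hjk; omega⟩
  have hnext := h.succ_add_two_le (k + 1)
  refine ⟨_, h.update (fun i hi => by rw [Nat.add_right_cancel hi]; exact hvk)
    (fun hd => by have := hnext hd; omega) (by have := h.lt k (by omega); omega) hvv hsum,
    fun i => ?_, by simpa⟩
  simp only [Function.update_apply]
  split_ifs <;> subst_vars <;> omega

end IsDSArms

namespace IntPartition

theorem InDS.isDSArms {lam : IntPartition} {t : ℕ} (h : lam.InDS t) :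
    IsDSArms t lam.durfee lam.diagArm := by
  obtain ⟨hsc, hct, hct₁, hdist⟩ := h
  have hsucc : ∀ i, i + 1 < lam.durfee → lam.diagArm (i + 1) + 2 ≤ lam.diagArm i := by
    intro i hi
    have := lam.antitone i (i + 1) (Nat.le_succ i)
    have := hdist i (i + 1) (by omega) hi (by omega)
    have := (lam.lt_durfee_iff (i + 1)).mp hi
    unfold diagArm
    omega
  have hgap : ∀ a ∈ lam.diagArms, a + 1 ∉ lam.diagArms := by
    rintro _ ⟨i, hi, rfl⟩ ⟨j, hj, hij⟩
    rcases lt_or_gt_of_ne (show i ≠ j by rintro rfl; omega) with h | h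
    · have := Nat.add_mul_sub_le_of_forall_succ hsucc h.le hj
      omega
    · have := Nat.add_mul_sub_le_of_forall_succ hsucc h.le hi
      omega
  have hlt : ∀ a ∈ lam.diagArms, a < t := by
    rintro _ ⟨i, hi, rfl⟩
    have := lam.diagArm_lt_parts_zero hi
    have := hsc.parts_zero_le_of_isCore hgap hct hct₁
    omega
  have hsum := (hsc.isCore_iff hlt).mp hct
  have hsum₁ := (hsc.isCore_iff fun a ha => (hlt a ha).trans t.lt_succ_self).mp hct₁
  exact ⟨hsucc, fun i hi => hlt _ ⟨i, hi, rfl⟩,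
    fun i hi j hj => hsum _ ⟨i, hi, rfl⟩ _ ⟨j, hj, rfl⟩,
    fun i hi j hj h => hsum₁ _ ⟨i, hi, rfl⟩ _ ⟨j, hj, rfl⟩ (by omega)⟩

-- The cells of the self-conjugate partition whose diagonal arms are `q 0, …, q (d - 1)`:
-- `(i, j)` lies on the diagonal hook of `(m, m)`, `m = min i j`.
def DiagArmsCell (q : ℕ → ℕ) (d i j : ℕ) : Prop :=
  min i j < d ∧ max i j ≤ q (min i j) + min i j

section OfDiagArms

variable {q : ℕ → ℕ} {d : ℕ}

theorem diagArmsCell_comm {i j : ℕ} : DiagArmsCell q d i j ↔ DiagArmsCell q d j i := by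
  simp only [DiagArmsCell, min_comm, max_comm]

theorem diagArmsCell_iff_of_le {i j : ℕ} (h : i ≤ j) :
    DiagArmsCell q d i j ↔ i < d ∧ j ≤ q i + i := by
  simp only [DiagArmsCell, min_eq_left h, max_eq_right h]

variable (hq : ∀ i, i + 1 < d → q (i + 1) < q i)
include hq

theorem DiagArmsCell.max_le {i j : ℕ} (h : DiagArmsCell q d i j) : max i j ≤ q 0 := by
  have := Nat.add_le_add_of_forall_succ_lt hq (Nat.zero_le _) h.1
  have := h.2
  omega

theorem DiagArmsCell.of_le_left {i i' j : ℕ} (h : DiagArmsCell q d i j) (hi : i' ≤ i) :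
    DiagArmsCell q d i' j := by
  rcases le_total i' j with hj | hj
  · rw [diagArmsCell_iff_of_le hj]
    rcases le_total i j with hij | hij
    · obtain ⟨hid, hjq⟩ := (diagArmsCell_iff_of_le hij).mp h
      have := Nat.add_le_add_of_forall_succ_lt hq hi hid
      omega
    · obtain ⟨hjd, hiq⟩ := (diagArmsCell_iff_of_le hij).mp (diagArmsCell_comm.mp h)
      have := Nat.add_le_add_of_forall_succ_lt hq hj hjd
      omega
  · rw [diagArmsCell_comm, diagArmsCell_iff_of_le hj]
    obtain ⟨hjd, hiq⟩ := (diagArmsCell_iff_of_le (hj.trans hi)).mp (diagArmsCell_comm.mp h)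
    omega

theorem lt_natCard_diagArmsCell_iff (i j : ℕ) :
    j < Nat.card {j | DiagArmsCell q d i j} ↔ DiagArmsCell q d i j := by
  refine (Set.mem_iff_lt_natCard_of_isLowerSet (s := {j | DiagArmsCell q d i j}) ?_ ?_ j).symm
  · exact fun j' j hj h => diagArmsCell_comm.mp ((diagArmsCell_comm.mp h).of_le_left hq hj)
  · exact (Set.finite_Iic (q 0)).subset fun j h => le_trans (le_max_right i j) (h.max_le hq)

noncomputable def ofDiagArms : IntPartition where
  parts i := Nat.card {j | DiagArmsCell q d i j}
  antitone i i' hi := le_of_forall_lt fun j hj => by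
    rw [lt_natCard_diagArmsCell_iff hq] at hj ⊢
    exact hj.of_le_left hq hi
  finite := ⟨q 0 + 1, fun i hi => by
    by_contra h
    have := ((lt_natCard_diagArmsCell_iff hq i 0).mp (Nat.pos_of_ne_zero h)).max_le hq
    omega⟩

theorem lt_ofDiagArms_parts_iff {i j : ℕ} :
    j < (ofDiagArms hq).parts i ↔ DiagArmsCell q d i j :=
  lt_natCard_diagArmsCell_iff hq i j

theorem ofDiagArms_isSelfConjugate : (ofDiagArms hq).IsSelfConjugate := fun j => by
  simp only [conjParts, lt_ofDiagArms_parts_iff]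
  exact congrArg (fun s : Set ℕ => Nat.card s) (Set.ext fun i => diagArmsCell_comm)

theorem durfee_ofDiagArms : (ofDiagArms hq).durfee = d :=
  eq_of_forall_lt_iff fun i => by
    rw [lt_durfee_iff, lt_ofDiagArms_parts_iff, diagArmsCell_iff_of_le le_rfl]
    omega

theorem ofDiagArms_parts {i : ℕ} (hi : i < d) : (ofDiagArms hq).parts i = q i + i + 1 :=
  eq_of_forall_lt_iff fun j => by
    rw [lt_ofDiagArms_parts_iff]
    rcases le_total i j with hij | hji
    · rw [diagArmsCell_iff_of_le hij]
      omega
    · rw [diagArmsCell_comm, diagArmsCell_iff_of_le hji]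
      have := Nat.add_le_add_of_forall_succ_lt hq hji hi
      omega

theorem diagArm_ofDiagArms {i : ℕ} (hi : i < d) : (ofDiagArms hq).diagArm i = q i := by
  have := ofDiagArms_parts hq hi
  unfold diagArm
  omega

theorem diagArms_ofDiagArms : (ofDiagArms hq).diagArms = q '' Set.Iio d := by
  rw [diagArms, durfee_ofDiagArms]
  exact Set.image_congr fun i hi => diagArm_ofDiagArms hq hi

theorem size_ofDiagArms : (ofDiagArms hq).size = ∑ r ∈ Finset.range d, (2 * q r + 1) := by
  rw [(ofDiagArms_isSelfConjugate hq).size_eq, durfee_ofDiagArms]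
  exact Finset.sum_congr rfl fun r hr => by rw [diagArm_ofDiagArms hq (Finset.mem_range.mp hr)]

end OfDiagArms

end IntPartition

open IntPartition in
theorem IsDSArms.inDS_ofDiagArms {t d : ℕ} {q : ℕ → ℕ} (h : IsDSArms t d q) :
    (ofDiagArms h.succ_lt).InDS t := by
  have hsc := ofDiagArms_isSelfConjugate h.succ_lt
  have harms := diagArms_ofDiagArms h.succ_lt
  have hlt : ∀ a ∈ (ofDiagArms h.succ_lt).diagArms, a < t := by
    rw [harms]
    rintro _ ⟨i, hi, rfl⟩
    exact h.lt i hi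
  refine ⟨hsc, (hsc.isCore_iff hlt).mpr ?_,
    (hsc.isCore_iff fun a ha => (hlt a ha).trans t.lt_succ_self).mpr ?_, ?_⟩
  · rw [harms]
    rintro _ ⟨i, hi, rfl⟩ _ ⟨j, hj, rfl⟩
    exact h.add_add_one_ne i hi j hj
  · rw [harms]
    rintro _ ⟨i, hi, rfl⟩ _ ⟨j, hj, rfl⟩ hij
    exact h.add_ne i hi j hj (by omega)
  · intro i j hi hj hij
    rw [durfee_ofDiagArms] at hi hj
    rw [ofDiagArms_parts _ hi, ofDiagArms_parts _ hj]
    rcases lt_or_gt_of_ne hij with hij | hij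
    · have := Nat.add_mul_sub_le_of_forall_succ h.succ_add_two_le hij.le hj
      omega
    · have := Nat.add_mul_sub_le_of_forall_succ h.succ_add_two_le hij.le hi
      omega

theorem diag_hook_gaps_of_largest_inDS_general (t : ℕ) (lam : IntPartition)
    (hlam : lam.InDS t)
    (hmax : ∀ mu : IntPartition, mu.InDS t → mu.size ≤ lam.size) :
    ∀ i : ℕ, i + 1 < lam.durfee →
      lam.hook i i - lam.hook (i + 1) (i + 1) = 4 ∨
        lam.hook i i - lam.hook (i + 1) (i + 1) = 6 := by
  intro i hi
  have hsc := hlam.1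
  have harms := hlam.isDSArms
  rw [hsc.hook_self (by omega), hsc.hook_self hi]
  have := harms.succ_add_two_le i hi
  by_contra hgap
  obtain ⟨q, hq, hle, hlt⟩ := harms.exists_larger_of_add_four_le hi (by omega)
  have hsize := hmax _ hq.inDS_ofDiagArms
  rw [IntPartition.size_ofDiagArms, hsc.size_eq] at hsize
  refine hsize.not_gt (Finset.sum_lt_sum (fun r _ => ?_) ⟨i + 1, Finset.mem_range.mpr hi, ?_⟩)
  · have := hle r
    omega
  · omega

/-- For `t ≥ 6`, in a partition of largest size in `DS(t)` the difference of
consecutive main diagonal hook lengths is `4` or `6`. -/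
theorem diag_hook_gaps_of_largest_inDS (t : ℕ) (ht : 6 ≤ t) (lam : IntPartition)
    (hlam : lam.InDS t)
    (hmax : ∀ mu : IntPartition, mu.InDS t → mu.size ≤ lam.size) :
    ∀ i : ℕ, i + 1 < lam.durfee →
      lam.hook i i - lam.hook (i + 1) (i + 1) = 4 ∨
        lam.hook i i - lam.hook (i + 1) (i + 1) = 6 :=
  diag_hook_gaps_of_largest_inDS_general t lam hlam hmax
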